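/- Define the one-step rewriting relation →_Π on V = 𝔖(Z) →₀ k (the rewriting system of the inverse average operator identity ⌊x⌋⌊y⌋ = ⌊⌊x⌋y⌋): f →_Π g iff there exist a context q and nonempty bracketed words u, v such that the word t := q[⌊u⌋ ++ ⌊v⌋] lies in supp(f) and g = f − f(t)·δ_t + f(t)·δ_{q[⌊⌊u⌋ ++ v⌋]}. Then →_Π is convergent (terminating and confluent). -/

import Mathlib

/-- Bracketed letters on `Z`: either a generator, or the letter `⌊w⌋` obtained by
applying the formal operator `⌊ ⌋` to a nonempty word `w = h :: t`. -/
inductive BLtr (Z : Type*) where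
  | of : Z → BLtr Z
  | flr : BLtr Z → List (BLtr Z) → BLtr Z

/-- Bracketed words on `Z`: nonempty lists of bracketed letters. -/
def BWord (Z : Type*) := {l : List (BLtr Z) // l ≠ []}

/-- Concatenation of bracketed words. -/
def BWord.cat {Z : Type*} (u v : BWord Z) : BWord Z :=
  ⟨u.1 ++ v.1, by
    intro h
    rcases List.append_eq_nil_iff.mp h with ⟨h1, _⟩
    exact u.2 h1⟩

/-- `⌊w⌋`: the one-letter word obtained by applying the formal operator to `w`. -/
def BWord.flr {Z : Type*} (w : BWord Z) : BWord Z :=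
  ⟨[BLtr.flr (w.1.head w.2) w.1.tail], by simp⟩

/-- Contexts (`⋆`-words) on `Z`. -/
inductive Ctx (Z : Type*) where
  | base : List (BLtr Z) → List (BLtr Z) → Ctx Z
  | deep : List (BLtr Z) → List (BLtr Z) → Ctx Z → Ctx Z

/-- Substitution of a bracketed word into a context. -/
def Ctx.subst {Z : Type*} : Ctx Z → BWord Z → BWord Z
  | .base l r, u => ⟨l ++ u.1 ++ r, by
      intro h
      rcases List.append_eq_nil_iff.mp h with ⟨h1, _⟩
      rcases List.append_eq_nil_iff.mp h1 with ⟨_, h2⟩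
      exact u.2 h2⟩
  | .deep l r q, u => ⟨l ++ (BWord.flr (q.subst u)).1 ++ r, by
      intro h
      rcases List.append_eq_nil_iff.mp h with ⟨h1, _⟩
      rcases List.append_eq_nil_iff.mp h1 with ⟨_, h2⟩
      exact (BWord.flr (q.subst u)).2 h2⟩

/-- Termination of a binary relation: no infinite chain of one-step rewritings. -/
def RelTerminating {V : Type*} (r : V → V → Prop) : Prop :=
  ¬ ∃ f : ℕ → V, ∀ n, r (f n) (f (n + 1))

/-- Confluence of a binary relation. -/
def RelConfluent {V : Type*} (r : V → V → Prop) : Prop :=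
  ∀ f g₁ g₂ : V, Relation.ReflTransGen r f g₁ → Relation.ReflTransGen r f g₂ →
    ∃ h, Relation.ReflTransGen r g₁ h ∧ Relation.ReflTransGen r g₂ h

/-- One-step rewriting relation of the inverse average operator identity
`⌊x⌋⌊y⌋ = ⌊⌊x⌋y⌋`. -/
def InvAvgStep {Z k : Type*} [Field k] (f g : BWord Z →₀ k) : Prop :=
  ∃ (q : Ctx Z) (u v : BWord Z),
    f (q.subst ((u.flr).cat v.flr)) ≠ 0 ∧
    g = f - Finsupp.single (q.subst ((u.flr).cat v.flr)) (f (q.subst ((u.flr).cat v.flr)))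
        + f (q.subst ((u.flr).cat v.flr)) •
          Finsupp.single (q.subst (BWord.flr ((u.flr).cat v))) (1 : k)

/-!
Normal forms are computed by a recursive function: the inside of every bracket is normalised
first, and reading a word from the right, a floor letter `⌊x⌋` arriving in front of a floor letter
`⌊w⌋` is merged into `⌊⌊x⌋w⌋` (recursively, since `w` may itself begin with a floor letter).
Writing `a ◁ w` for this merging prepend, one has `⌊P⌋ ◁ (⌊Q⌋ ◁ S) = ⌊⌊P⌋ ◁ Q⌋ ◁ S`, which says
exactly that both sides of `⌊x⌋⌊y⌋ = ⌊⌊x⌋y⌋` have the same normal form; and a word that differs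
from its normal form contains a redex.

A step keeps the number `n` of letters and raises the sum `D` of their depths by `1 + |u|`; since
`D ≤ n²`, the weight `n² - D` decreases. On linear combinations, the sum of the weights over the
support decreases, the linear extension of the normal form is invariant, and every element
rewrites to its image under it, so any two reducts of `f` rewrite to a common element.
-/

section Rewriting

open Relation

variable {α : Type*} {r : α → α → Prop}

theorem RelTerminating.of_decreasing (m : α → ℕ) (hm : ∀ a b, r a b → m b < m a) :
    RelTerminating r := by
  rintro ⟨f, hf⟩
  obtain ⟨n, hn⟩ := WellFounded.not_rel_apply_succ (r := (· < ·)) (m ∘ f)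
  exact hn (hm _ _ (hf n))

theorem reflTransGen_apply_of_decreasing (m : α → ℕ) (hm : ∀ a b, r a b → m b < m a)
    (N : α → α) (hN : ∀ a b, r a b → N b = N a) (hprog : ∀ a, N a ≠ a → ∃ b, r a b) (a : α) :
    ReflTransGen r a (N a) := by
  induction a using (measure m).wf.induction with
  | _ a ih =>
    by_cases ha : N a = a
    · rw [ha]
    · obtain ⟨b, hab⟩ := hprog a ha
      exact .head hab (hN a b hab ▸ ih b (hm a b hab))

theorem RelConfluent.of_reflTransGen_apply (N : α → α) (hN : ∀ a b, r a b → N b = N a)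
    (hreach : ∀ a, ReflTransGen r a (N a)) : RelConfluent r := by
  have hinv : ∀ {a b}, ReflTransGen r a b → N b = N a := fun h => by
    induction h with
    | refl => rfl
    | tail _ hbc ih => rw [hN _ _ hbc, ih]
  intro a b₁ b₂ h₁ h₂
  exact ⟨N b₁, hreach b₁, ((hinv h₂).trans (hinv h₁).symm) ▸ hreach b₂⟩

end Rewriting

namespace Finsupp

variable {α M : Type*} [AddCommMonoid M]

/-- The linear extension of a rewriting relation `R` on a basis: a basis element `t` of the
support is replaced by some `t'` with `R t t'`, keeping its coefficient. -/
def LinearStep (R : α → α → Prop) (f g : α →₀ M) : Prop :=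
  ∃ t t', R t t' ∧ f t ≠ 0 ∧ g = f.erase t + single t' (f t)

variable {R : α → α → Prop} {f g : α →₀ M}

theorem LinearStep.sum_support_lt (m : α → ℕ) (hm : ∀ t t', R t t' → m t' < m t)
    (h : LinearStep R f g) : ∑ w ∈ g.support, m w < ∑ w ∈ f.support, m w := by
  classical
  obtain ⟨t, t', htt', hft, rfl⟩ := h
  have hsub : (f.erase t + single t' (f t)).support ⊆ f.support.erase t ∪ {t'} :=
    support_add.trans (Finset.union_subset_union support_erase.subset support_single_subset)
  have hunion := Finset.sum_union_inter (s₁ := f.support.erase t) (s₂ := {t'}) (f := m)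
  have herase := Finset.sum_erase_add f.support m (mem_support_iff.mpr hft)
  have := Finset.sum_le_sum_of_subset (f := m) hsub
  have := hm t t' htt'
  simp only [Finset.sum_singleton] at hunion
  omega

theorem LinearStep.mapDomain_eq {β : Type*} (φ : α → β) (hφ : ∀ t t', R t t' → φ t' = φ t)
    (h : LinearStep R f g) : mapDomain φ g = mapDomain φ f := by
  obtain ⟨t, t', htt', -, rfl⟩ := h
  conv_rhs => rw [← erase_add_single t f]
  rw [mapDomain_add, mapDomain_add, mapDomain_single, mapDomain_single, hφ t t' htt']

theorem LinearStep.relTerminating (m : α → ℕ) (hm : ∀ t t', R t t' → m t' < m t) :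
    RelTerminating (LinearStep (M := M) R) :=
  .of_decreasing _ fun _ _ => sum_support_lt m hm

theorem LinearStep.relConfluent (m : α → ℕ) (hm : ∀ t t', R t t' → m t' < m t) (φ : α → α)
    (hφ : ∀ t t', R t t' → φ t' = φ t) (hprog : ∀ t, φ t ≠ t → ∃ t', R t t') :
    RelConfluent (LinearStep (M := M) R) := by
  refine .of_reflTransGen_apply (mapDomain φ) (fun _ _ => mapDomain_eq φ hφ)
    (reflTransGen_apply_of_decreasing (fun f => ∑ w ∈ f.support, m w)
      (fun _ _ => sum_support_lt m hm) _ (fun _ _ => mapDomain_eq φ hφ) fun f hf => ?_)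
  obtain ⟨t, ht, hφt⟩ : ∃ t ∈ f.support, φ t ≠ t := by
    by_contra! h
    exact hf (by rw [mapDomain_congr (g := id) h, mapDomain_id])
  obtain ⟨t', htt'⟩ := hprog t hφt
  exact ⟨_, t, t', htt', mem_support_iff.mp ht, rfl⟩

end Finsupp

def InvAvgWordStep {Z : Type*} (t t' : BWord Z) : Prop :=
  ∃ (q : Ctx Z) (u v : BWord Z), t = q.subst (u.flr.cat v.flr) ∧ t' = q.subst (u.flr.cat v).flr

namespace BLtr

variable {Z : Type*}

mutual
def size : BLtr Z → ℕ
  | .of _ => 1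
  | .flr h t => size h + listSize t + 1
def listSize : List (BLtr Z) → ℕ
  | [] => 0
  | a :: t => size a + listSize t
end

mutual
/-- The sum, over all occurrences of letters, of the number of brackets enclosing them. -/
def depthSum : BLtr Z → ℕ
  | .of _ => 0
  | .flr h t => depthSum h + listDepthSum t + size h + listSize t
def listDepthSum : List (BLtr Z) → ℕ
  | [] => 0
  | a :: t => depthSum a + listDepthSum t
end

theorem listSize_append (l l' : List (BLtr Z)) : listSize (l ++ l') = listSize l + listSize l' := by
  induction l with
  | nil => simp [listSize]
  | cons a t ih => simp only [List.cons_append, listSize, ih]; omega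

theorem listDepthSum_append (l l' : List (BLtr Z)) :
    listDepthSum (l ++ l') = listDepthSum l + listDepthSum l' := by
  induction l with
  | nil => simp [listDepthSum]
  | cons a t ih => simp only [List.cons_append, listDepthSum, ih]; omega

mutual
theorem depthSum_le : ∀ a : BLtr Z, depthSum a ≤ size a ^ 2
  | .of _ => by simp [depthSum]
  | .flr h t => by
    have := depthSum_le h
    have := listDepthSum_le t
    simp only [depthSum, size]
    nlinarith
theorem listDepthSum_le : ∀ l : List (BLtr Z), listDepthSum l ≤ listSize l ^ 2
  | [] => by simp [listDepthSum]
  | a :: t => by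
    have := depthSum_le a
    have := listDepthSum_le t
    simp only [listDepthSum, listSize]
    nlinarith [add_sq (size a) (listSize t)]
end

end BLtr

namespace BWord

open BLtr

variable {Z : Type*}

theorem flr_val_of_val_eq_cons {w : BWord Z} {h : BLtr Z} {t : List (BLtr Z)}
    (hw : w.1 = h :: t) : w.flr.1 = [.flr h t] := by
  obtain ⟨l, _⟩ := w
  subst hw
  rfl

def size (w : BWord Z) : ℕ := listSize w.1

def depthSum (w : BWord Z) : ℕ := listDepthSum w.1

theorem size_cat (u v : BWord Z) : (u.cat v).size = u.size + v.size :=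
  listSize_append _ _

theorem depthSum_cat (u v : BWord Z) : (u.cat v).depthSum = u.depthSum + v.depthSum :=
  listDepthSum_append _ _

theorem size_flr (w : BWord Z) : w.flr.size = w.size + 1 := by
  obtain ⟨_ | ⟨h, t⟩, hw⟩ := w
  · exact absurd rfl hw
  · simp only [size, BWord.flr, listSize, BLtr.size, List.head_cons, List.tail_cons]

theorem depthSum_flr (w : BWord Z) : w.flr.depthSum = w.depthSum + w.size := by
  obtain ⟨_ | ⟨h, t⟩, hw⟩ := w
  · exact absurd rfl hw
  · simp only [depthSum, size, BWord.flr, listDepthSum, BLtr.depthSum, listSize,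
      List.head_cons, List.tail_cons]
    omega

theorem depthSum_le (w : BWord Z) : w.depthSum ≤ w.size ^ 2 :=
  listDepthSum_le _

def weight (w : BWord Z) : ℕ := w.size ^ 2 - w.depthSum

end BWord

namespace Ctx

open BLtr

variable {Z : Type*}

theorem size_subst (q : Ctx Z) {x y : BWord Z} (h : x.size = y.size) :
    (q.subst x).size = (q.subst y).size := by
  induction q with
  | base l r =>
    simp only [BWord.size, subst, listSize_append] at h ⊢
    omega
  | deep l r q ih =>
    have hx := BWord.size_flr (q.subst x)
    have hy := BWord.size_flr (q.subst y)
    simp only [BWord.size, subst, listSize_append] at ih hx hy ⊢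
    omega

theorem depthSum_subst_lt (q : Ctx Z) {x y : BWord Z} (hs : x.size = y.size)
    (hd : x.depthSum < y.depthSum) : (q.subst x).depthSum < (q.subst y).depthSum := by
  induction q with
  | base l r =>
    simp only [BWord.depthSum, subst, listDepthSum_append] at hd ⊢
    omega
  | deep l r q ih =>
    have hx := BWord.depthSum_flr (q.subst x)
    have hy := BWord.depthSum_flr (q.subst y)
    have hs' := q.size_subst hs
    simp only [BWord.depthSum, BWord.size, subst, listDepthSum_append] at ih hx hy hs' ⊢
    omega

end Ctx

namespace InvAvgWordStep

open BWord

variable {Z : Type*} {t t' : BWord Z}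

theorem weight_lt (h : InvAvgWordStep t t') : t'.weight < t.weight := by
  obtain ⟨q, u, v, rfl, rfl⟩ := h
  have hs : (u.flr.cat v).flr.size = (u.flr.cat v.flr).size := by
    simp only [size_flr, size_cat]; omega
  have hd : (u.flr.cat v.flr).depthSum < (u.flr.cat v).flr.depthSum := by
    simp only [depthSum_flr, depthSum_cat, size_flr, size_cat]; omega
  have hs' := q.size_subst hs
  have hd' := q.depthSum_subst_lt hs.symm hd
  have hle := (q.subst (u.flr.cat v).flr).depthSum_le
  rw [hs'] at hle
  unfold BWord.weight
  rw [hs']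
  omega

end InvAvgWordStep

namespace BLtr

variable {Z : Type*}

/- Normal forms handle a nonempty word `h :: t` as the pair `(h, t)`, whose bracket `⌊h :: t⌋` is
`flrOf (h, t)`; this way no nonemptiness proofs are needed. -/

def flrOf (p : BLtr Z × List (BLtr Z)) : BLtr Z := .flr p.1 p.2

/-- Prepends a letter to a word in normal form, merging `⌊x⌋⌊w⌋` into `⌊⌊x⌋w⌋` recursively. -/
def consNF : BLtr Z → BLtr Z × List (BLtr Z) → BLtr Z × List (BLtr Z)
  | .of z, (h, t) => (.of z, h :: t)
  | .flr a b, (.of z, t) => (.flr a b, .of z :: t)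
  | .flr a b, (.flr h t, r) => (flrOf (consNF (.flr a b) (h, t)), r)

def consNFList (a : BLtr Z) : List (BLtr Z) → List (BLtr Z)
  | [] => [a]
  | h :: t => (consNF a (h, t)).1 :: (consNF a (h, t)).2

mutual
def nf : BLtr Z → BLtr Z
  | .of z => .of z
  | .flr h t => flrOf (nfCons h t)
termination_by a => sizeOf a
/-- The normal form of the word `h :: t`. -/
def nfCons : BLtr Z → List (BLtr Z) → BLtr Z × List (BLtr Z)
  | h, [] => (nf h, [])
  | h, a :: t => consNF (nf h) (nfCons a t)
termination_by h t => sizeOf h + sizeOf t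
end

def nfList : List (BLtr Z) → List (BLtr Z)
  | [] => []
  | h :: t => (nfCons h t).1 :: (nfCons h t).2

theorem nfList_cons (h : BLtr Z) (t : List (BLtr Z)) :
    nfList (h :: t) = consNFList (nf h) (nfList t) := by
  cases t <;> simp only [nfList, nfCons, consNFList]

theorem nfList_append_congr (l : List (BLtr Z)) {x y : List (BLtr Z)} (h : nfList x = nfList y) :
    nfList (l ++ x) = nfList (l ++ y) := by
  induction l with
  | nil => exact h
  | cons a l ih => rw [List.cons_append, List.cons_append, nfList_cons, nfList_cons, ih]

theorem nf_flr_congr {h h' : BLtr Z} {t t' : List (BLtr Z)}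
    (e : nfList (h :: t) = nfList (h' :: t')) : nf (.flr h t) = nf (.flr h' t') := by
  simp only [nfList, List.cons.injEq] at e
  simp only [nf, flrOf, e]

theorem consNF_flrOf_consNF_flrOf (P Q : BLtr Z × List (BLtr Z)) :
    ∀ S, consNF (flrOf P) (consNF (flrOf Q) S) = consNF (flrOf (consNF (flrOf P) Q)) S
  | (.of _, _) => by simp only [flrOf, consNF]
  | (.flr h t, r) => by
    have ih := consNF_flrOf_consNF_flrOf P Q (h, t)
    simp only [flrOf, consNF, Prod.mk.eta] at ih ⊢
    rw [ih]

theorem consNFList_flrOf_consNFList_flrOf (P Q : BLtr Z × List (BLtr Z)) (R : List (BLtr Z)) :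
    consNFList (flrOf P) (consNFList (flrOf Q) R) = consNFList (flrOf (consNF (flrOf P) Q)) R := by
  cases R with
  | nil => simp only [consNFList, flrOf, consNF]
  | cons h t => simp only [consNFList, Prod.mk.eta, consNF_flrOf_consNF_flrOf]

theorem nfList_flr_flr (a c : BLtr Z) (b d r : List (BLtr Z)) :
    nfList (.flr a b :: .flr c d :: r) = nfList (.flr (.flr a b) (c :: d) :: r) := by
  simp only [nfList_cons, nf, nfCons]
  exact consNFList_flrOf_consNFList_flrOf _ _ _

end BLtr

open BLtr in
theorem Ctx.nfList_subst_congr {Z : Type*} (q : Ctx Z) {x y : BWord Z}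
    (h : ∀ r, nfList (x.1 ++ r) = nfList (y.1 ++ r)) :
    nfList (q.subst x).1 = nfList (q.subst y).1 := by
  induction q with
  | base l r =>
    simp only [subst, List.append_assoc]
    exact nfList_append_congr l (h r)
  | deep l r q ih =>
    simp only [subst, List.append_assoc]
    refine nfList_append_congr l ?_
    obtain ⟨a, s, hx⟩ := List.exists_cons_of_ne_nil (q.subst x).2
    obtain ⟨b, s', hy⟩ := List.exists_cons_of_ne_nil (q.subst y).2
    rw [BWord.flr_val_of_val_eq_cons hx, BWord.flr_val_of_val_eq_cons hy, List.singleton_append,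
      List.singleton_append, nfList_cons, nfList_cons, nf_flr_congr (hx ▸ hy ▸ ih)]

def BWord.nf {Z : Type*} (w : BWord Z) : BWord Z :=
  ⟨BLtr.nfList w.1, by
    obtain ⟨h, t, hw⟩ := List.exists_cons_of_ne_nil w.2
    rw [hw, BLtr.nfList]
    exact List.cons_ne_nil _ _⟩

theorem InvAvgWordStep.nf_eq {Z : Type*} {t t' : BWord Z} (h : InvAvgWordStep t t') :
    t'.nf = t.nf := by
  obtain ⟨q, ⟨_ | ⟨a, b⟩, hu⟩, v, rfl, rfl⟩ := h
  · exact absurd rfl hu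
  obtain ⟨_ | ⟨c, d⟩, hv⟩ := v
  · exact absurd rfl hv
  exact Subtype.ext (q.nfList_subst_congr fun r => (BLtr.nfList_flr_flr a c b d r).symm)

namespace BLtr

variable {Z : Type*}

def HasRedex (l : List (BLtr Z)) : Prop :=
  ∃ (q : Ctx Z) (u v : BWord Z), l = (q.subst (u.flr.cat v.flr)).1

theorem HasRedex.cons {l : List (BLtr Z)} (a : BLtr Z) (hl : HasRedex l) : HasRedex (a :: l) := by
  obtain ⟨q, u, v, rfl⟩ := hl
  cases q with
  | base l r => exact ⟨.base (a :: l) r, u, v, by simp [Ctx.subst]⟩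
  | deep l r q => exact ⟨.deep (a :: l) r q, u, v, by simp [Ctx.subst]⟩

theorem HasRedex.flr_cons {h : BLtr Z} {t : List (BLtr Z)} (hl : HasRedex (h :: t))
    (r : List (BLtr Z)) : HasRedex (.flr h t :: r) := by
  obtain ⟨q, u, v, he⟩ := hl
  exact ⟨.deep [] r q, u, v, by simp [Ctx.subst, BWord.flr_val_of_val_eq_cons he.symm]⟩

theorem hasRedex_flr_flr (a c : BLtr Z) (b d r : List (BLtr Z)) :
    HasRedex (.flr a b :: .flr c d :: r) :=
  ⟨.base [] r, ⟨a :: b, List.cons_ne_nil _ _⟩, ⟨c :: d, List.cons_ne_nil _ _⟩, rfl⟩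

theorem nfList_eq_self_of_not_hasRedex : ∀ l : List (BLtr Z), ¬HasRedex l → nfList l = l
  | [], _ => rfl
  | a :: t, hl => by
    have ht : nfList t = t := nfList_eq_self_of_not_hasRedex t fun h => hl (h.cons a)
    have ha : nf a = a := by
      cases a with
      | of z => simp only [nf]
      | flr h s =>
        have e := nfList_eq_self_of_not_hasRedex (h :: s) fun h => hl (h.flr_cons t)
        simp only [nfList, List.cons.injEq] at e
        simp only [nf, flrOf, e]
    rw [nfList_cons, ht, ha]
    match a, t, hl with
    | .of _, [], _ | .of _, _ :: _, _ | .flr _ _, [], _ | .flr _ _, .of _ :: _, _ =>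
      simp only [consNFList, consNF]
    | .flr _ _, .flr _ _ :: _, hl => exact absurd (hasRedex_flr_flr ..) hl

end BLtr

theorem BWord.exists_invAvgWordStep_of_nf_ne {Z : Type*} (w : BWord Z) (h : w.nf ≠ w) :
    ∃ w', InvAvgWordStep w w' := by
  obtain ⟨q, u, v, he⟩ : BLtr.HasRedex w.1 := by
    by_contra hr
    exact h (Subtype.ext (BLtr.nfList_eq_self_of_not_hasRedex _ hr))
  exact ⟨_, q, u, v, Subtype.ext he, rfl⟩

open Finsupp

theorem invAvgStep_eq_linearStep {Z k : Type*} [Field k] :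
    InvAvgStep (Z := Z) (k := k) = LinearStep InvAvgWordStep := by
  ext f g
  constructor
  · rintro ⟨q, u, v, hne, rfl⟩
    exact ⟨_, _, ⟨q, u, v, rfl, rfl⟩, hne, by rw [erase_eq_sub_single, smul_single_one]⟩
  · rintro ⟨_, _, ⟨q, u, v, rfl, rfl⟩, hne, rfl⟩
    exact ⟨q, u, v, hne, by rw [erase_eq_sub_single, smul_single_one]⟩

/-- The rewriting system of the inverse average operator identity is convergent:
terminating and confluent. -/
theorem inverseAverage_rewriting_convergent {Z k : Type*} [Field k] :
    RelTerminating (InvAvgStep (Z := Z) (k := k)) ∧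
      RelConfluent (InvAvgStep (Z := Z) (k := k)) := by
  rw [invAvgStep_eq_linearStep]
  exact ⟨LinearStep.relTerminating _ fun _ _ => InvAvgWordStep.weight_lt,
    LinearStep.relConfluent _ (fun _ _ => InvAvgWordStep.weight_lt) BWord.nf
      (fun _ _ => InvAvgWordStep.nf_eq) BWord.exists_invAvgWordStep_of_nf_ne⟩
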